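/- arXiv:1110.6107 — 2 statements merged into one kernel-verified Lean document; each statement's English description precedes it below -/
import Mathlib

section
/- Let φ : I → ℝ be an infinitely differentiable (C^∞) function on an open interval I ⊆ ℝ, and suppose there is a nonzero polynomial F in two real variables such that F(x, φ(x)) = 0 for all x ∈ I and the gradient of F is nonzero at every point (x, φ(x)) with x ∈ I. Then φ is real-analytic on I (at every point of I, φ equals a convergent power series in a neighbourhood of that point). -/
open MvPolynomial ContinuousLinearMap

set_option linter.unnecessarySeqFocus false

lemma hasFDerivAt_eval_mvpoly {σ : Type*} [Fintype σ] [DecidableEq σ]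
    (F : MvPolynomial σ ℝ) (v : σ → ℝ) :
    HasFDerivAt (fun w : σ → ℝ => eval w F)
      (∑ i, eval v (pderiv i F) • (proj i : (σ → ℝ) →L[ℝ] ℝ)) v := by
  induction F using MvPolynomial.induction_on with
  | C a => simpa [pderiv_C] using hasFDerivAt_const a v
  | add p q hp hq =>
      have := hp.add hq
      simp only [eval_add, map_add] at this ⊢
      simpa [Finset.sum_add_distrib, add_smul, Pi.add_def] using this
  | mul_X p j hp =>
      have h1 : HasFDerivAt (fun w : σ → ℝ => w j) (proj j : (σ → ℝ) →L[ℝ] ℝ) v :=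
        hasFDerivAt_apply j v
      have h2 := hp.mul h1
      simp only [eval_mul, eval_X, Pi.mul_def] at h2 ⊢
      refine h2.congr_fderiv (Eq.symm ?_)
      have key : ∀ i : σ, eval v (pderiv i (p * X j)) =
          eval v (pderiv i p) * v j + (if j = i then eval v p else 0) := by
        intro i
        rw [pderiv_mul, pderiv_X]
        simp [Pi.single_apply, apply_ite (eval v)]
      ext w
      simp only [sum_apply, smul_apply, proj_apply, add_apply, smul_eq_mul, key, add_mul,
        ite_mul, zero_mul, Finset.sum_add_distrib, Finset.sum_ite_eq, Finset.mem_univ, if_true,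
        Finset.mul_sum]
      rw [add_comm]
      congr 1
      exact Finset.sum_congr rfl fun i _ => by ring

/-- The invertible linear map `(u, v) ↦ (u, c₀ u + c₁ v)` for `c₁ ≠ 0`. -/
noncomputable def newtonEquiv (c₀ c₁ : ℝ) (h : c₁ ≠ 0) : (Fin 2 → ℝ) ≃ₗ[ℝ] (Fin 2 → ℝ) where
  toFun w := ![w 0, c₀ * w 0 + c₁ * w 1]
  map_add' u v := by
    funext i; fin_cases i <;> simp [Pi.add_apply] <;> ring
  map_smul' r u := by
    funext i; fin_cases i <;> simp [Pi.smul_apply] <;> ring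
  invFun w := ![w 0, (w 1 - c₀ * w 0) / c₁]
  left_inv w := by
    funext i
    fin_cases i
    · simp
    · simp only [Fin.mk_one, Matrix.cons_val_one, Matrix.head_cons, Matrix.cons_val_zero]
      field_simp
      ring
  right_inv w := by
    funext i
    fin_cases i
    · simp
    · simp only [Fin.mk_one, Matrix.cons_val_one, Matrix.head_cons, Matrix.cons_val_zero]
      field_simp
      ring

/-- Newton's theorem: if a `C^∞` function `φ` on an open interval has its graph contained in
a regular algebraic curve `F = 0` (the gradient of `F` being nonzero at every point of the
graph), then `φ` is real-analytic on the interval. -/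
theorem smooth_graph_on_regular_algebraic_curve_is_analytic
    (a b : ℝ) (φ : ℝ → ℝ)
    (hφ : ContDiffOn ℝ (⊤ : ℕ∞) φ (Set.Ioo a b))
    (F : MvPolynomial (Fin 2) ℝ) (hF : F ≠ 0)
    (hgraph : ∀ x ∈ Set.Ioo a b, eval ![x, φ x] F = 0)
    (hreg : ∀ x ∈ Set.Ioo a b,
      (eval ![x, φ x] (pderiv (0 : Fin 2) F),
       eval ![x, φ x] (pderiv (1 : Fin 2) F)) ≠ (0, 0)) :
    ∀ x ∈ Set.Ioo a b, AnalyticAt ℝ φ x := by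
  intro x₀ hx₀
  classical
  have hIoo : Set.Ioo a b ∈ nhds x₀ := isOpen_Ioo.mem_nhds hx₀
  set c₀ : ℝ := eval ![x₀, φ x₀] (pderiv (0 : Fin 2) F) with hc₀def
  set c₁ : ℝ := eval ![x₀, φ x₀] (pderiv (1 : Fin 2) F) with hc₁def
  set f : (Fin 2 → ℝ) → ℝ := fun w => eval w F with hfdef
  set Df : (Fin 2 → ℝ) →L[ℝ] ℝ := c₀ • proj 0 + c₁ • proj 1 with hDfdef
  have hDf : HasFDerivAt f Df ![x₀, φ x₀] := by
    simpa [Fin.sum_univ_two] using hasFDerivAt_eval_mvpoly F ![x₀, φ x₀]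
  -- φ is differentiable at x₀
  have hφd : DifferentiableAt ℝ φ x₀ :=
    (hφ.contDiffAt hIoo).differentiableAt (by simp)
  -- the curve x ↦ (x, φ x)
  have hu : HasDerivAt (fun x => (![x, φ x] : Fin 2 → ℝ)) ![1, deriv φ x₀] x₀ := by
    rw [hasDerivAt_pi]
    intro i
    fin_cases i
    · simpa using hasDerivAt_id' (x := x₀)
    · simpa using hφd.hasDerivAt
  -- differentiate F(x, φ x) = 0
  have hchain : HasDerivAt (fun x => f ![x, φ x]) (Df ![1, deriv φ x₀]) x₀ :=
    hDf.comp_hasDerivAt (f := fun x => (![x, φ x] : Fin 2 → ℝ)) x₀ hu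
  have hkey : c₀ + c₁ * deriv φ x₀ = 0 := by
    have hEq : (fun x => f ![x, φ x]) =ᶠ[nhds x₀] fun _ => (0 : ℝ) := by
      filter_upwards [hIoo] with x hx using hgraph x hx
    have h0 : HasDerivAt (fun _ : ℝ => (0 : ℝ)) (Df ![1, deriv φ x₀]) x₀ :=
      hchain.congr_of_eventuallyEq hEq.symm
    have huniq := h0.unique (hasDerivAt_const x₀ (0 : ℝ))
    rw [← huniq]
    simp [hDfdef]
  have hc₁ : c₁ ≠ 0 := by
    intro h
    apply hreg x₀ hx₀
    have hc₀0 : c₀ = 0 := by rw [h] at hkey; linarith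
    rw [← hc₀def, ← hc₁def, hc₀0, h]
  -- the map G(u,v) = (u, F(u,v)) and its analyticity
  set G : (Fin 2 → ℝ) → (Fin 2 → ℝ) := fun w => ![w 0, f w] with hGdef
  have hf_an : ∀ w, AnalyticAt ℝ f w := fun w =>
    (AnalyticOnNhd.eval_mvPolynomial (𝕜 := ℝ) F) w (Set.mem_univ _)
  have hG_an : ∀ w, AnalyticAt ℝ G w := by
    intro w
    have h0 : ∀ i : Fin 2, AnalyticAt ℝ ((![fun w : Fin 2 → ℝ => w 0, f] : Fin 2 →
        ((Fin 2 → ℝ) → ℝ)) i) w := by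
      intro i
      fin_cases i
      · exact (proj (0 : Fin 2) : (Fin 2 → ℝ) →L[ℝ] ℝ).analyticAt w
      · exact hf_an w
    have := AnalyticAt.pi h0
    refine this.congr ?_
    refine Filter.Eventually.of_forall fun u => ?_
    funext i
    fin_cases i <;> rfl
  -- the derivative of G as a continuous linear equivalence
  set iA := (newtonEquiv c₀ c₁ hc₁).toContinuousLinearEquiv with hiAdef
  have hGstrict : HasStrictFDerivAt G
      (iA : (Fin 2 → ℝ) →L[ℝ] (Fin 2 → ℝ)) ![x₀, φ x₀] := by
    rw [hasStrictFDerivAt_pi']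
    intro i
    fin_cases i
    · show HasStrictFDerivAt (fun w => G w 0)
        ((proj (0 : Fin 2)).comp (iA : (Fin 2 → ℝ) →L[ℝ] (Fin 2 → ℝ))) ![x₀, φ x₀]
      have heq : (proj (0 : Fin 2)).comp (iA : (Fin 2 → ℝ) →L[ℝ] (Fin 2 → ℝ))
          = proj (0 : Fin 2) := by
        ext w
        simp [hiAdef, newtonEquiv]
      rw [heq]
      exact hasStrictFDerivAt_apply 0 _
    · show HasStrictFDerivAt (fun w => G w 1)
        ((proj (1 : Fin 2)).comp (iA : (Fin 2 → ℝ) →L[ℝ] (Fin 2 → ℝ))) ![x₀, φ x₀]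
      have heq : (proj (1 : Fin 2)).comp (iA : (Fin 2 → ℝ) →L[ℝ] (Fin 2 → ℝ)) = Df := by
        ext w
        simp [hiAdef, newtonEquiv, hDfdef]
      rw [heq]
      have hfs := (hf_an ![x₀, φ x₀]).hasStrictFDerivAt
      rw [hDf.fderiv] at hfs
      exact hfs
  -- the local inverse of G is analytic
  set PH := hGstrict.toOpenPartialHomeomorph G with hPHdef
  have hPHcoe : ⇑PH = G := hGstrict.toOpenPartialHomeomorph_coe
  have hmem : ![x₀, φ x₀] ∈ PH.source := hGstrict.mem_toOpenPartialHomeomorph_source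
  obtain ⟨p, hp⟩ := hG_an ![x₀, φ x₀]
  have hp1 : p 1 = (continuousMultilinearCurryFin1 ℝ (Fin 2 → ℝ) (Fin 2 → ℝ)).symm
      (iA : (Fin 2 → ℝ) →L[ℝ] (Fin 2 → ℝ)) := by
    have h1 := hp.hasFDerivAt.unique hGstrict.hasFDerivAt
    rw [← h1]
    simp
  have hps : HasFPowerSeriesAt PH p ![x₀, φ x₀] := by rw [hPHcoe]; exact hp
  have hsymm := PH.hasFPowerSeriesAt_symm hmem hps hp1
  have hloc : PH ![x₀, φ x₀] = ![x₀, (0 : ℝ)] := by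
    rw [hPHcoe, hGdef]
    have : f ![x₀, φ x₀] = 0 := hgraph x₀ hx₀
    simp [this]
  rw [hloc] at hsymm
  have hsymm_an : AnalyticAt ℝ (⇑PH.symm) ![x₀, (0 : ℝ)] := ⟨_, hsymm⟩
  -- the analytic implicit function ψ x = (G⁻¹(x, 0))₁
  have hL : AnalyticAt ℝ (fun x : ℝ => (![x, (0 : ℝ)] : Fin 2 → ℝ)) x₀ := by
    have h0 : ∀ i : Fin 2, AnalyticAt ℝ ((![fun x : ℝ => x, fun _ => (0 : ℝ)] : Fin 2 →
        (ℝ → ℝ)) i) x₀ := by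
      intro i
      fin_cases i
      · exact analyticAt_id
      · exact analyticAt_const
    have := AnalyticAt.pi h0
    refine this.congr ?_
    refine Filter.Eventually.of_forall fun u => ?_
    funext i
    fin_cases i <;> rfl
  have hψ : AnalyticAt ℝ ((fun v : Fin 2 → ℝ => v 1) ∘
      (⇑PH.symm ∘ (fun x : ℝ => (![x, (0 : ℝ)] : Fin 2 → ℝ)))) x₀ := by
    apply AnalyticAt.comp
    · exact (proj (1 : Fin 2) : (Fin 2 → ℝ) →L[ℝ] ℝ).analyticAt _
    apply AnalyticAt.comp
    · exact hsymm_an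
    · exact hL
  -- φ agrees with ψ near x₀
  refine hψ.congr ?_
  have hcont : ContinuousAt (fun x => (![x, φ x] : Fin 2 → ℝ)) x₀ := hu.continuousAt
  have hsrc : PH.source ∈ nhds (![x₀, φ x₀] : Fin 2 → ℝ) := PH.open_source.mem_nhds hmem
  filter_upwards [hIoo, hcont.preimage_mem_nhds hsrc] with x hx hxs
  have hgval : PH ![x, φ x] = ![x, (0 : ℝ)] := by
    rw [hPHcoe, hGdef]
    have : f ![x, φ x] = 0 := hgraph x hx
    simp [this]
  have hinv : PH.symm ![x, (0 : ℝ)] = ![x, φ x] := by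
    rw [← hgval]
    exact PH.left_inv hxs
  show ((fun v : Fin 2 → ℝ => v 1) ∘
      (⇑PH.symm ∘ (fun x : ℝ => (![x, (0 : ℝ)] : Fin 2 → ℝ)))) x = φ x
  simp only [Function.comp_apply]
  rw [hinv]
  simp
end

section
/- The closed unit disk K = {(x, y) ∈ ℝ² : x² + y² ≤ 1} is not algebraically squarable: there is no nonzero real polynomial Q in four variables such that Q(S(a,b,c), a, b, c) = 0 for all (a, b, c) ∈ ℝ³ with (a, b) ≠ (0, 0), where S(a,b,c) is the Lebesgue area of K ∩ {(x, y) : ax + by + c ≤ 0}. -/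
open MvPolynomial

/-- The area of the segment cut from `K` by the line `a x + b y + c = 0`:
the Lebesgue measure of `K ∩ {(x, y) : a x + b y + c ≤ 0}`. -/
noncomputable def segArea (K : Set (ℝ × ℝ)) (a b c : ℝ) : ℝ :=
  (MeasureTheory.volume (K ∩ {p : ℝ × ℝ | a * p.1 + b * p.2 + c ≤ 0})).toReal

/-!
For `(a, b) ≠ (0, 0)`, `r = √(a² + b²)` and `|θ| ≤ π/2`, the line `a x + b y + r sin θ = 0` cuts
from the unit disk a segment of area `π/2 - θ - sin θ cos θ`. If `Q(S, a, b, c)` vanished on all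
segments, the analytic function `θ ↦ Q(π/2 - θ - sin θ cos θ, a, b, r sin θ)` would vanish on
`[-π/2, π/2]`, hence on all of `ℝ`. Turning `θ` by whole turns keeps `c = r sin θ` fixed and shifts
the first argument by multiples of `2π`, so `Q(·, a, b, c)` has infinitely many roots whenever
`|c| ≤ r`. Thus `Q` vanishes on a box with infinite sides and is zero.
-/

open Real Set MeasureTheory

def unitDisk : Set (ℝ × ℝ) := {p | p.1 ^ 2 + p.2 ^ 2 ≤ 1}

theorem segArea_mul {t : ℝ} (ht : 0 < t) (K : Set (ℝ × ℝ)) (a b c : ℝ) :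
    segArea K (t * a) (t * b) (t * c) = segArea K a b c := by
  have (p : ℝ × ℝ) : t * a * p.1 + t * b * p.2 + t * c ≤ 0 ↔ a * p.1 + b * p.2 + c ≤ 0 := by
    conv_rhs => rw [← smul_nonpos_iff_nonpos_of_pos_left ht, smul_eq_mul]
    ring_nf
  simp only [segArea, this]

theorem volume_setOf_sq_le (u : ℝ) : volume {y : ℝ | y ^ 2 ≤ u} = ENNReal.ofReal (2 * √u) := by
  rcases le_or_gt 0 u with hu | hu
  · have : {y : ℝ | y ^ 2 ≤ u} = Icc (-√u) √u := by ext y; exact Real.sq_le hu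
    rw [this, Real.volume_Icc, sub_neg_eq_add, two_mul]
  · have : {y : ℝ | y ^ 2 ≤ u} = ∅ :=
      eq_empty_of_forall_notMem fun y hy => (sq_nonneg y).not_gt (lt_of_le_of_lt hy hu)
    rw [this, sqrt_eq_zero_of_nonpos hu.le, measure_empty, mul_zero, ENNReal.ofReal_zero]

theorem volume_unitDisk_inter_fst_le {t : ℝ} (ht : -1 ≤ t) :
    volume (unitDisk ∩ {p | p.1 ≤ t}) = ENNReal.ofReal (∫ x in (-1)..t, 2 * √(1 - x ^ 2)) := by
  have hslice (x : ℝ) : volume (Prod.mk x ⁻¹' (unitDisk ∩ {p | p.1 ≤ t})) =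
      (Ioc (-1) t).indicator (fun x => ENNReal.ofReal (2 * √(1 - x ^ 2))) x := by
    by_cases hxt : x ≤ t
    · have : Prod.mk x ⁻¹' (unitDisk ∩ {p | p.1 ≤ t}) = {y | y ^ 2 ≤ 1 - x ^ 2} := by
        ext y
        simp only [unitDisk, mem_preimage, mem_inter_iff, mem_ofPred_eq, hxt, and_true]
        constructor <;> intro <;> linarith
      rw [this, volume_setOf_sq_le]
      by_cases hx : -1 < x
      · rw [indicator_of_mem (show x ∈ Ioc (-1) t from ⟨hx, hxt⟩)]
      · rw [indicator_of_notMem fun h => hx h.1, sqrt_eq_zero_of_nonpos (by nlinarith),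
          mul_zero, ENNReal.ofReal_zero]
    · have : Prod.mk x ⁻¹' (unitDisk ∩ {p | p.1 ≤ t}) = ∅ := by
        ext y; simp [hxt]
      rw [this, measure_empty, indicator_of_notMem fun h => hxt h.2]
  have hmeas : MeasurableSet (unitDisk ∩ {p : ℝ × ℝ | p.1 ≤ t}) :=
    (measurableSet_le (by fun_prop) measurable_const).inter
      (measurableSet_le measurable_fst measurable_const)
  have hint : IntegrableOn (fun x : ℝ => 2 * √(1 - x ^ 2)) (Ioc (-1) t) :=
    (Continuous.integrableOn_Icc (by fun_prop)).mono_set Ioc_subset_Icc_self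
  rw [Measure.volume_eq_prod, Measure.prod_apply hmeas]
  simp only [hslice]
  rw [lintegral_indicator measurableSet_Ioc, intervalIntegral.integral_of_le ht,
    ofReal_integral_eq_lintegral_ofReal hint (.of_forall fun x => by positivity)]

theorem integral_two_sqrt_one_sub_sq_sin {φ : ℝ} (hφ : φ ∈ Icc (-(π / 2)) (π / 2)) :
    ∫ x in (-1)..sin φ, 2 * √(1 - x ^ 2) = φ + π / 2 + sin φ * cos φ :=
  calc
    _ = 2 * ∫ x in sin (-(π / 2))..sin φ, √(1 - x ^ 2) := by
      rw [sin_neg, sin_pi_div_two, intervalIntegral.integral_const_mul]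
    _ = 2 * ∫ x in (-(π / 2))..φ, √(1 - sin x ^ 2) * cos x := by
      congr 1
      exact (intervalIntegral.integral_comp_mul_deriv (fun x _ => hasDerivAt_sin x)
        continuousOn_cos (by fun_prop)).symm
    _ = 2 * ∫ x in (-(π / 2))..φ, cos x ^ 2 := by
      congr 1
      refine intervalIntegral.integral_congr fun x hx => ?_
      rw [uIcc_of_le hφ.1] at hx
      rw [← cos_eq_sqrt_one_sub_sin_sq hx.1 (hx.2.trans hφ.2), sq]
    _ = φ + π / 2 + sin φ * cos φ := by
      rw [integral_cos_sq, cos_neg, cos_pi_div_two, sin_neg, sin_pi_div_two]; ring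

theorem volume_unitDisk_inter_halfPlane {a b : ℝ} (hab : a ^ 2 + b ^ 2 = 1) (c : ℝ) :
    volume (unitDisk ∩ {p | a * p.1 + b * p.2 + c ≤ 0}) = volume (unitDisk ∩ {p | p.1 ≤ -c}) := by
  let f : ℝ × ℝ →ₗ[ℝ] ℝ × ℝ :=
    Matrix.toLin (Module.Basis.finTwoProd ℝ) (Module.Basis.finTwoProd ℝ) !![a, b; -b, a]
  have hdet : LinearMap.det f = 1 := by
    rw [LinearMap.det_toLin, Matrix.det_fin_two_of]; linear_combination hab
  have hpre : f ⁻¹' (unitDisk ∩ {p | p.1 ≤ -c}) = unitDisk ∩ {p | a * p.1 + b * p.2 + c ≤ 0} := by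
    ext p
    simp only [f, unitDisk, mem_preimage, mem_inter_iff, mem_ofPred_eq,
      Matrix.toLin_finTwoProd_apply]
    have : (a * p.1 + b * p.2) ^ 2 + (-b * p.1 + a * p.2) ^ 2 = p.1 ^ 2 + p.2 ^ 2 := by
      linear_combination (p.1 ^ 2 + p.2 ^ 2) * hab
    rw [this, ← le_neg_iff_add_nonpos_right]
  rw [← hpre, Measure.addHaar_preimage_linearMap _ (by simp [hdet]), hdet]
  simp

theorem sq_add_sq_pos {R : Type*} [CommRing R] [LinearOrder R] [IsStrictOrderedRing R] {a b : R}
    (hab : (a, b) ≠ (0, 0)) : 0 < a ^ 2 + b ^ 2 := by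
  have : a ≠ 0 ∨ b ≠ 0 := by contrapose! hab; simp [hab]
  rcases this with h | h <;> positivity

theorem segArea_unitDisk {a b θ : ℝ} (hab : (a, b) ≠ (0, 0))
    (hθ : θ ∈ Icc (-(π / 2)) (π / 2)) :
    segArea unitDisk a b (√(a ^ 2 + b ^ 2) * sin θ) = π / 2 - θ - sin θ * cos θ := by
  set r := √(a ^ 2 + b ^ 2)
  have hpos := sq_add_sq_pos hab
  have hr : 0 < r := sqrt_pos.2 hpos
  have hunit : (a / r) ^ 2 + (b / r) ^ 2 = 1 := by
    rw [div_pow, div_pow, ← add_div, sq_sqrt hpos.le, div_self hpos.ne']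
  have hφ : -θ ∈ Icc (-(π / 2)) (π / 2) := ⟨neg_le_neg hθ.2, by linarith [hθ.1]⟩
  calc segArea unitDisk a b (r * sin θ)
      = segArea unitDisk (r * (a / r)) (r * (b / r)) (r * sin θ) := by
        rw [mul_div_cancel₀ _ hr.ne', mul_div_cancel₀ _ hr.ne']
    _ = (volume (unitDisk ∩ {p | p.1 ≤ sin (-θ)})).toReal := by
        rw [segArea_mul hr, segArea, volume_unitDisk_inter_halfPlane hunit, sin_neg]
    _ = π / 2 - θ - sin θ * cos θ := by
        rw [volume_unitDisk_inter_fst_le (neg_one_le_sin _), ENNReal.toReal_ofReal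
          (intervalIntegral.integral_nonneg (neg_one_le_sin _) fun _ _ => by positivity),
          integral_two_sqrt_one_sub_sq_sin hφ, sin_neg, cos_neg]
        ring

theorem MvPolynomial.eval_cons_eq_zero_of_infinite {R : Type*} [CommRing R] [IsDomain R] {n : ℕ}
    {p : MvPolynomial (Fin (n + 1)) R} {x : Fin n → R}
    (h : {t | eval (Fin.cons t x) p = 0}.Infinite) (t : R) : eval (Fin.cons t x) p = 0 := by
  simp only [eval_eq_eval_mv_eval'] at h ⊢
  rw [Polynomial.eq_zero_of_infinite_isRoot _ h, Polynomial.eval_zero]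

theorem analyticOnNhd_eval_segArea_curve (Q : MvPolynomial (Fin 4) ℝ) (a b r : ℝ) :
    AnalyticOnNhd ℝ (fun θ => eval ![π / 2 - θ - sin θ * cos θ, a, b, r * sin θ] Q) univ := by
  intro θ _
  simp only [← coe_aeval_eq_eval]
  refine AnalyticAt.aeval_mvPolynomial (fun i => ?_) Q
  fin_cases i <;>
    simp only [Fin.zero_eta, Fin.mk_one, Fin.reduceFinMk, Matrix.cons_val_zero, Matrix.cons_val_one,
      Matrix.cons_val] <;>
    fun_prop

def IsSegAreaRelation (K : Set (ℝ × ℝ)) (Q : MvPolynomial (Fin 4) ℝ) : Prop :=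
  ∀ a b c : ℝ, (a, b) ≠ (0, 0) → eval ![segArea K a b c, a, b, c] Q = 0

namespace IsSegAreaRelation

variable {Q : MvPolynomial (Fin 4) ℝ}

theorem eval_curve_eq_zero (hQ : IsSegAreaRelation unitDisk Q) {a b : ℝ}
    (hab : (a, b) ≠ (0, 0)) (θ : ℝ) :
    eval ![π / 2 - θ - sin θ * cos θ, a, b, √(a ^ 2 + b ^ 2) * sin θ] Q = 0 := by
  have hIcc : ∀ θ ∈ Icc (-(π / 2)) (π / 2),
      eval ![π / 2 - θ - sin θ * cos θ, a, b, √(a ^ 2 + b ^ 2) * sin θ] Q = 0 :=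
    fun θ hθ => segArea_unitDisk hab hθ ▸ hQ a b _ hab
  have hnhds : Icc (-(π / 2)) (π / 2) ∈ nhds 0 :=
    Icc_mem_nhds (by linarith [pi_pos]) (by linarith [pi_pos])
  exact (analyticOnNhd_eval_segArea_curve Q a b _).eqOn_zero_of_preconnected_of_eventuallyEq_zero
    isPreconnected_univ (mem_univ 0) (Filter.eventually_of_mem hnhds hIcc) (mem_univ θ)

theorem eval_mul_sin_eq_zero (hQ : IsSegAreaRelation unitDisk Q) {a b : ℝ}
    (hab : (a, b) ≠ (0, 0)) (θ s : ℝ) :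
    eval ![s, a, b, √(a ^ 2 + b ^ 2) * sin θ] Q = 0 := by
  refine eval_cons_eq_zero_of_infinite (infinite_of_injective_forall_mem
    (f := fun k : ℕ => π / 2 - θ - sin θ * cos θ - k * (2 * π)) (fun k l hkl => ?_) fun k => ?_) s
  · simpa [pi_ne_zero] using hkl
  · have := hQ.eval_curve_eq_zero hab (θ + k * (2 * π))
    rwa [sin_add_nat_mul_two_pi, cos_add_nat_mul_two_pi, ← sub_sub,
      sub_right_comm _ (k * (2 * π))] at this

theorem eval_eq_zero_of_abs_le (hQ : IsSegAreaRelation unitDisk Q) {a b c : ℝ}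
    (hab : (a, b) ≠ (0, 0)) (hc : |c| ≤ √(a ^ 2 + b ^ 2)) (s : ℝ) : eval ![s, a, b, c] Q = 0 := by
  set r := √(a ^ 2 + b ^ 2)
  have hr : 0 < r := sqrt_pos.2 (sq_add_sq_pos hab)
  have hcr : c / r ∈ Icc (-1) 1 := abs_le.1 (by rwa [abs_div, abs_of_pos hr, div_le_one hr])
  have := hQ.eval_mul_sin_eq_zero hab (arcsin (c / r)) s
  rwa [sin_arcsin hcr.1 hcr.2, mul_div_cancel₀ _ hr.ne'] at this

end IsSegAreaRelation

/-- Newton's Lemma 28 for Kepler's ovals: the closed unit disk is not algebraically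
squarable. -/
theorem unit_disk_not_algebraically_squarable :
    ¬ ∃ Q : MvPolynomial (Fin 4) ℝ, Q ≠ 0 ∧
        ∀ a b c : ℝ, (a, b) ≠ (0, 0) →
          eval ![segArea {p : ℝ × ℝ | p.1 ^ 2 + p.2 ^ 2 ≤ 1} a b c, a, b, c] Q = 0 := by
  rintro ⟨Q, hQ, hvan : IsSegAreaRelation unitDisk Q⟩
  refine hQ (funext_set ![univ, Ici 1, univ, Icc (-1) 1] ?_ fun x hx => ?_)
  · simp [Fin.forall_fin_succ, infinite_univ, Ici_infinite, Icc_infinite]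
  have ha : 1 ≤ x 1 := hx 1 (mem_univ _)
  have hc : |x 3| ≤ 1 := abs_le.2 (hx 3 (mem_univ _))
  have hab : (x 1, x 2) ≠ (0, 0) := fun h => by simp at h; linarith
  have := hvan.eval_eq_zero_of_abs_le hab
    (hc.trans (ha.trans (le_sqrt_of_sq_le (le_add_of_nonneg_right (sq_nonneg _))))) (x 0)
  have hvec : ![x 0, x 1, x 2, x 3] = x := by ext i; fin_cases i <;> rfl
  rwa [hvec, ← map_zero (eval x)] at this
end
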